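/- arXiv:2001.03015 — 5 statements merged into one kernel-verified Lean document; each statement's English description precedes it below -/
import Mathlib

section
/- For every integer k ≥ 1 there exists a sequence of 2^k - 1 acyclic edge additions such that, no matter how an online algorithm irrevocably orients each edge upon arrival, some vertex attains in-degree at least k. More precisely, there is an adversarial strategy using 2^k - 1 edges forcing maximum in-degree k against any irrevocable online orientation algorithm. -/
/-- An online orientation algorithm: given the history (a list of previously arrived
edges together with the orientation chosen for each; `true` means "oriented toward
the second endpoint") and a newly arriving edge, it irrevocably chooses an
orientation for the new edge. -/
abbrev OnlineOrientAlg : Type := List ((ℕ × ℕ) × Bool) → ℕ × ℕ → Bool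

/-- The history (list of edges with their chosen orientations) after the first `t`
edges of the sequence `e` have been processed by algorithm `A`. -/
def runHist (A : OnlineOrientAlg) (e : ℕ → ℕ × ℕ) : ℕ → List ((ℕ × ℕ) × Bool)
  | 0 => []
  | t + 1 => runHist A e t ++ [((e t), A (runHist A e t) (e t))]

/-- The head (the vertex towards which the edge points) of the `i`-th edge. -/
def runHead (A : OnlineOrientAlg) (e : ℕ → ℕ × ℕ) (i : ℕ) : ℕ :=
  if A (runHist A e i) (e i) then (e i).2 else (e i).1

/-- In-degree of `v` after the first `t` edges are oriented by `A` on sequence `e`. -/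
def runIndeg (A : OnlineOrientAlg) (e : ℕ → ℕ × ℕ) (t v : ℕ) : ℕ :=
  ((Finset.range t).filter (fun i => runHead A e i = v)).card

/-!
Identify the vertices `0, …, 2^k - 1` with the leaves of a complete binary tree of depth `k`.
The adversary works through the internal nodes bottom-up; at a node it joins the current
*champions* of the two child subtrees, and the head chosen by the algorithm becomes the champion
of the node. A champion has received an edge at every internal node on the way up from its leaf,
so the champion of the root has in-degree `k`. Each edge joins two vertices lying in disjoint
subtrees, which the earlier edges (all inside single subtrees) have not connected; hence the edges
are distinct and form a forest.
-/

namespace Nat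

/-- `x` lies in the subtree of `j` in the binary heap on `ℕ`, where `c / 2` is the parent of `c`. -/
def InSubtree (x j : ℕ) : Prop := ∃ m, x / 2 ^ m = j

namespace InSubtree

theorem refl (x : ℕ) : InSubtree x x := ⟨0, by simp⟩

theorem of_div_two_eq {x j : ℕ} (h : x / 2 = j) : InSubtree x j := ⟨1, by simpa using h⟩

theorem trans {x y z : ℕ} (hxy : InSubtree x y) (hyz : InSubtree y z) : InSubtree x z := by
  obtain ⟨a, rfl⟩ := hxy
  obtain ⟨b, rfl⟩ := hyz
  exact ⟨a + b, by rw [pow_add, Nat.div_div_eq_div_mul]⟩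

theorem total {x j j' : ℕ} (h : InSubtree x j) (h' : InSubtree x j') :
    InSubtree j j' ∨ InSubtree j' j := by
  obtain ⟨a, rfl⟩ := h
  obtain ⟨b, rfl⟩ := h'
  rcases le_total a b with hab | hab
  · exact .inl ⟨b - a, by rw [Nat.div_div_eq_div_mul, ← pow_add, Nat.add_sub_cancel' hab]⟩
  · exact .inr ⟨a - b, by rw [Nat.div_div_eq_div_mul, ← pow_add, Nat.add_sub_cancel' hab]⟩

theorem eq_or_le_div_two {x j : ℕ} (h : InSubtree x j) : j = x ∨ j ≤ x / 2 := by
  obtain ⟨_ | m, rfl⟩ := h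
  · simp
  · right
    rw [pow_succ', ← Nat.div_div_eq_div_mul]
    exact Nat.div_le_self _ _

theorem not_left_and_right {x j : ℕ} (hj : 1 ≤ j) (hl : InSubtree x (2 * j))
    (hr : InSubtree x (2 * j + 1)) : False := by
  rcases hl.total hr with h | h <;> rcases h.eq_or_le_div_two with h | h <;> omega

end InSubtree

end Nat

open Nat (InSubtree)

namespace SimpleGraph

theorem Reachable.mem_of_adj_mem {V : Type*} {G : SimpleGraph V} {S : Set V}
    (hS : ∀ u v, G.Adj u v → u ∈ S → v ∈ S) {u v : V} (h : G.Reachable u v) (hu : u ∈ S) :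
    v ∈ S := by
  obtain ⟨p⟩ := h
  induction p with
  | nil => exact hu
  | cons hadj _ ih => exact ih (hS _ _ hadj hu)

end SimpleGraph

section EdgeGraph

open SimpleGraph

variable {V : Type*} (e : ℕ → V × V)

def edgeGraph (t : ℕ) : SimpleGraph V :=
  fromEdgeSet {s | ∃ i < t, s = s((e i).1, (e i).2)}

theorem edgeGraph_zero : edgeGraph e 0 = ⊥ := by
  simp [edgeGraph]

theorem edgeGraph_succ (t : ℕ) :
    edgeGraph e (t + 1) = edgeGraph e t ⊔ edge (e t).1 (e t).2 := by
  rw [edgeGraph, edgeGraph, edge, ← fromEdgeSet_union]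
  congr 1
  ext s
  exact Nat.exists_lt_succ_right

variable {e}

theorem isAcyclic_edgeGraph {T : ℕ}
    (hnew : ∀ t < T, ¬ (edgeGraph e t).Reachable (e t).1 (e t).2) :
    (edgeGraph e T).IsAcyclic := by
  induction T with
  | zero => simp [edgeGraph_zero]
  | succ t ih =>
    rw [edgeGraph_succ]
    exact (ih fun i hi => hnew i (by omega)).sup_edge_of_not_reachable (hnew t (by omega))

theorem edgeGraph_reachable_of_mk_eq {i t : ℕ} (hit : i < t)
    (heq : s((e i).1, (e i).2) = s((e t).1, (e t).2)) :
    (edgeGraph e t).Reachable (e t).1 (e t).2 := by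
  by_cases hloop : (e t).1 = (e t).2
  · rw [hloop]
  · exact Adj.reachable (by rw [edgeGraph, fromEdgeSet_adj]; exact ⟨⟨i, hit, heq.symm⟩, hloop⟩)

end EdgeGraph

section Play

variable (A : OnlineOrientAlg) (σ : List ((ℕ × ℕ) × Bool) → ℕ × ℕ)

def playHist : ℕ → List ((ℕ × ℕ) × Bool)
  | 0 => []
  | t + 1 => playHist t ++ [(σ (playHist t), A (playHist t) (σ (playHist t)))]

def play (t : ℕ) : ℕ × ℕ := σ (playHist A σ t)

theorem runHist_play (t : ℕ) : runHist A (play A σ) t = playHist A σ t := by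
  induction t with
  | zero => rfl
  | succ t ih => rw [runHist, playHist, ih, play]

theorem play_apply (t : ℕ) : play A σ t = σ (runHist A (play A σ) t) := by
  rw [runHist_play, play]

end Play

def headOf (x : (ℕ × ℕ) × Bool) : ℕ := if x.2 then x.1.2 else x.1.1

section RunHist

variable (A : OnlineOrientAlg) (e : ℕ → ℕ × ℕ)

theorem length_runHist (t : ℕ) : (runHist A e t).length = t := by
  induction t with
  | zero => rfl
  | succ t ih => simp [runHist, ih]

theorem getElem?_runHist {i t : ℕ} (hit : i < t) :
    (runHist A e t)[i]? = some (e i, A (runHist A e i) (e i)) := by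
  induction t with
  | zero => omega
  | succ t ih =>
    rw [runHist]
    rcases Nat.lt_succ_iff_lt_or_eq.mp hit with hi | rfl
    · rw [List.getElem?_append_left (by rw [length_runHist]; exact hi), ih hi]
    · simp [length_runHist]

theorem runIndeg_mono {t t' : ℕ} (h : t ≤ t') (v : ℕ) : runIndeg A e t v ≤ runIndeg A e t' v :=
  Finset.card_le_card (Finset.filter_subset_filter _ (Finset.range_subset_range.mpr h))

theorem runIndeg_succ_of_runHead_eq {t v : ℕ} (h : runHead A e t = v) :
    runIndeg A e (t + 1) v = runIndeg A e t v + 1 := by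
  rw [runIndeg, Finset.range_add_one, Finset.filter_insert, if_pos h,
    Finset.card_insert_of_notMem (by simp), runIndeg]

theorem headOf_runHist {i t : ℕ} (hit : i < t) :
    ((runHist A e t)[i]?.map headOf).getD 0 = runHead A e i := by
  rw [getElem?_runHist A e hit]
  rfl

end RunHist

namespace HeapAdversary

/- Vertex `v < n` is the leaf `n + v` of the heap on `{1, …, 2n - 1}`; the internal node `j` is
played at time `n - 1 - j`, after its children, by joining their champions, and its champion is
the head of that edge. `champOf n h c` reads the champion of `c` off the history `h`. -/
def champOf (n : ℕ) (h : List ((ℕ × ℕ) × Bool)) (c : ℕ) : ℕ :=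
  if n ≤ c then c - n else (h[n - 1 - c]?.map headOf).getD 0

def strategy (n : ℕ) (h : List ((ℕ × ℕ) × Bool)) : ℕ × ℕ :=
  (champOf n h (2 * (n - 1 - h.length)), champOf n h (2 * (n - 1 - h.length) + 1))

variable (A : OnlineOrientAlg) (n : ℕ)

def edges : ℕ → ℕ × ℕ := play A (strategy n)

def champ (c : ℕ) : ℕ := if n ≤ c then c - n else runHead A (edges A n) (n - 1 - c)

theorem runHead_edges {j : ℕ} (hj : j < n) : runHead A (edges A n) (n - 1 - j) = champ A n j := by
  simp [champ, Nat.not_le.mpr hj]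

theorem champOf_runHist {t c : ℕ} (hc : c < n → n - 1 - c < t) :
    champOf n (runHist A (edges A n) t) c = champ A n c := by
  unfold champOf champ
  split_ifs with hnc
  · rfl
  · exact headOf_runHist A _ (hc (by omega))

theorem edges_eq {j : ℕ} (hj : 1 ≤ j) (hjn : j < n) :
    edges A n (n - 1 - j) = (champ A n (2 * j), champ A n (2 * j + 1)) := by
  rw [edges, play_apply, ← edges, strategy, length_runHist, Nat.sub_sub_self (by omega),
    champOf_runHist A n (by omega), champOf_runHist A n (by omega)]

theorem exists_champ_eq_champ_child {j : ℕ} (hj : 1 ≤ j) (hjn : j < n) :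
    ∃ c, c / 2 = j ∧ champ A n j = champ A n c := by
  rw [← runHead_edges A n hjn, runHead, edges_eq A n hj hjn]
  split
  · exact ⟨2 * j + 1, by omega, rfl⟩
  · exact ⟨2 * j, by omega, rfl⟩

theorem inSubtree_champ {c : ℕ} (hc : 1 ≤ c) : InSubtree (champ A n c + n) c := by
  by_cases hnc : n ≤ c
  · rw [champ, if_pos hnc, Nat.sub_add_cancel hnc]
    exact .refl c
  · obtain ⟨c', hc', heq⟩ := exists_champ_eq_champ_child A n hc (by omega)
    rw [heq]
    exact (inSubtree_champ (c := c') (by omega)).trans (.of_div_two_eq hc')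
termination_by n - c

theorem inSubtree_edges {t : ℕ} (ht : t < n - 1) :
    InSubtree ((edges A n t).1 + n) (n - 1 - t) ∧ InSubtree ((edges A n t).2 + n) (n - 1 - t) := by
  obtain ⟨j, hj, hjn, rfl⟩ : ∃ j, 1 ≤ j ∧ j < n ∧ t = n - 1 - j :=
    ⟨n - 1 - t, by omega, by omega, by omega⟩
  rw [edges_eq A n hj hjn, Nat.sub_sub_self (by omega)]
  exact ⟨(inSubtree_champ A n (by omega)).trans (.of_div_two_eq (by omega)),
    (inSubtree_champ A n (by omega)).trans (.of_div_two_eq (by omega))⟩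

/- Every edge played before node `j` lies in the subtree of a node played earlier, hence either
inside or outside the subtree of `2 * j`: the vertices below `2 * j` are closed under the graph
played so far, and the champion of `2 * j + 1` is not among them. -/
theorem not_reachable_edges {t : ℕ} (ht : t < n - 1) :
    ¬ (edgeGraph (edges A n) t).Reachable (edges A n t).1 (edges A n t).2 := by
  obtain ⟨j, hj, hjn, rfl⟩ : ∃ j, 1 ≤ j ∧ j < n ∧ t = n - 1 - j :=
    ⟨n - 1 - t, by omega, by omega, by omega⟩
  rw [edges_eq A n hj hjn]
  intro hreach
  have hclosed : ∀ u v, (edgeGraph (edges A n) (n - 1 - j)).Adj u v →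
      InSubtree (u + n) (2 * j) → InSubtree (v + n) (2 * j) := by
    intro u v hadj hu
    rw [edgeGraph, SimpleGraph.fromEdgeSet_adj] at hadj
    obtain ⟨⟨i, hi, huv⟩, -⟩ := hadj
    obtain ⟨hi1, hi2⟩ := inSubtree_edges A n (t := i) (by omega)
    have hends : InSubtree (u + n) (n - 1 - i) ∧ InSubtree (v + n) (n - 1 - i) := by
      rcases Sym2.eq_iff.mp huv with ⟨rfl, rfl⟩ | ⟨rfl, rfl⟩
      exacts [⟨hi1, hi2⟩, ⟨hi2, hi1⟩]
    have hnode : InSubtree (n - 1 - i) (2 * j) := by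
      rcases hu.total hends.1 with h | h
      · rcases h.eq_or_le_div_two with h | h
        · rw [h]
          exact .refl _
        · omega
      · exact h
    exact hends.2.trans hnode
  exact InSubtree.not_left_and_right (by omega)
    (hreach.mem_of_adj_mem (S := {v | InSubtree (v + n) (2 * j)}) hclosed
      (inSubtree_champ A n (by omega)))
    (inSubtree_champ A n (by omega))

theorem log_sub_log_le_runIndeg {j : ℕ} (hj : 1 ≤ j) :
    Nat.log 2 n - Nat.log 2 j ≤ runIndeg A (edges A n) (n - j) (champ A n j) := by
  by_cases hnj : n ≤ j
  · rw [Nat.sub_eq_zero_of_le (Nat.log_mono_right hnj)]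
    exact Nat.zero_le _
  · obtain ⟨c, hc, heq⟩ := exists_champ_eq_champ_child A n hj (by omega)
    have hlog : Nat.log 2 j = Nat.log 2 c - 1 := by rw [← hc, Nat.log_div_base]
    calc Nat.log 2 n - Nat.log 2 j
        ≤ Nat.log 2 n - Nat.log 2 c + 1 := by omega
      _ ≤ runIndeg A (edges A n) (n - c) (champ A n c) + 1 :=
          Nat.add_le_add_right (log_sub_log_le_runIndeg (j := c) (by omega)) 1
      _ ≤ runIndeg A (edges A n) (n - 1 - j) (champ A n j) + 1 := by
          rw [heq]
          exact Nat.add_le_add_right (runIndeg_mono A _ (by omega) _) 1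
      _ = runIndeg A (edges A n) (n - j) (champ A n j) := by
          rw [← runIndeg_succ_of_runHead_eq A _ (runHead_edges A n (by omega))]
          congr 1
          omega
termination_by n - j

end HeapAdversary

open HeapAdversary in
theorem adversary_forces_indegree_general (A : OnlineOrientAlg) (k : ℕ) :
    ∃ e : ℕ → ℕ × ℕ,
      -- the `2^k - 1` arriving edges are pairwise distinct non-loops forming an
      -- acyclic undirected graph
      (∀ i < 2 ^ k - 1, (e i).1 ≠ (e i).2) ∧
      (∀ i < 2 ^ k - 1, ∀ j < 2 ^ k - 1, i ≠ j →
        s((e i).1, (e i).2) ≠ s((e j).1, (e j).2)) ∧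
      (SimpleGraph.fromEdgeSet
        {s : Sym2 ℕ | ∃ i < 2 ^ k - 1, s = s((e i).1, (e i).2)}).IsAcyclic ∧
      -- some vertex attains in-degree at least `k`
      ∃ v : ℕ, k ≤ runIndeg A e (2 ^ k - 1) v := by
  have hfresh := fun t (ht : t < 2 ^ k - 1) => not_reachable_edges A (2 ^ k) ht
  refine ⟨edges A (2 ^ k), fun t ht hloop => hfresh t ht (hloop ▸ .refl _), ?_,
    isAcyclic_edgeGraph hfresh, champ A (2 ^ k) 1, ?_⟩
  · intro i hi j hj hij heq
    rcases Nat.lt_or_gt_of_ne hij with hij | hij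
    · exact hfresh j hj (edgeGraph_reachable_of_mk_eq hij heq)
    · exact hfresh i hi (edgeGraph_reachable_of_mk_eq hij heq.symm)
  · simpa [Nat.log_pow] using log_sub_log_le_runIndeg A (2 ^ k) le_rfl

/-- For every `k ≥ 1` there is an adversarial strategy using `2^k - 1` acyclic edge
additions that forces any irrevocable online orientation algorithm to create a
vertex of in-degree at least `k`. -/
theorem adversary_forces_indegree (A : OnlineOrientAlg) (k : ℕ) (hk : 1 ≤ k) :
    ∃ e : ℕ → ℕ × ℕ,
      -- the `2^k - 1` arriving edges are pairwise distinct non-loops forming an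
      -- acyclic undirected graph
      (∀ i < 2 ^ k - 1, (e i).1 ≠ (e i).2) ∧
      (∀ i < 2 ^ k - 1, ∀ j < 2 ^ k - 1, i ≠ j →
        s((e i).1, (e i).2) ≠ s((e j).1, (e j).2)) ∧
      (SimpleGraph.fromEdgeSet
        {s : Sym2 ℕ | ∃ i < 2 ^ k - 1, s = s((e i).1, (e i).2)}).IsAcyclic ∧
      -- some vertex attains in-degree at least `k`
      ∃ v : ℕ, k ≤ runIndeg A e (2 ^ k - 1) v :=
  adversary_forces_indegree_general A k
end

section
/- Let T: ℕ → ℝ satisfy T(1) = 0 and T(n) ≤ max over 1 ≤ n₁ < n of [T(n₁) + T(n - n₁) + log₂(min(n₁, n - n₁))] for all n ≥ 2. Then T(n) ≤ n - log₂ n - 1 for all n ≥ 1. -/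
/-! Split `n = a + b` with `a ≤ b`. By induction the two parts contribute at most
`(a - log₂ a - 1) + (b - log₂ b - 1)`, and the merge cost `log₂ a` cancels the first logarithm,
leaving `n - 2 - log₂ b`. Since `n ≤ 2b`, `log₂ n ≤ 1 + log₂ b`, which closes the induction. -/

open Real

lemma logb_two_add_le_one_add_logb_two_right {a b : ℝ} (ha : 0 < a) (hab : a ≤ b) :
    logb 2 (a + b) ≤ 1 + logb 2 b := by
  have hb : 0 < b := ha.trans_le hab
  calc logb 2 (a + b) ≤ logb 2 (2 * b) := logb_le_logb_of_le one_lt_two (by positivity) (by linarith)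
    _ = 1 + logb 2 b := by rw [logb_mul two_ne_zero hb.ne', logb_self_eq_one one_lt_two]

lemma sub_logb_two_sub_one_add_le_of_le {a b : ℝ} (ha : 0 < a) (hab : a ≤ b) :
    (a - logb 2 a - 1) + (b - logb 2 b - 1) + logb 2 a ≤ (a + b) - logb 2 (a + b) - 1 := by
  linarith [logb_two_add_le_one_add_logb_two_right ha hab]

lemma sub_logb_two_sub_one_add_le {a b : ℝ} (ha : 0 < a) (hb : 0 < b) :
    (a - logb 2 a - 1) + (b - logb 2 b - 1) + logb 2 (min a b) ≤ (a + b) - logb 2 (a + b) - 1 := by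
  rcases le_total a b with hab | hba
  · rw [min_eq_left hab]
    exact sub_logb_two_sub_one_add_le_of_le ha hab
  · rw [min_eq_right hba, add_comm a b, add_comm (a - _ - _)]
    exact sub_logb_two_sub_one_add_le_of_le hb hba

/-- If `T : ℕ → ℝ` satisfies `T 1 = 0` and, for all `n ≥ 2`,
`T n ≤ max over 1 ≤ n₁ < n of (T n₁ + T (n - n₁) + log₂ (min n₁ (n - n₁)))`,
then `T n ≤ n - log₂ n - 1` for all `n ≥ 1`. -/
theorem flip_recurrence_bound (T : ℕ → ℝ)
    (h1 : T 1 = 0)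
    (hrec : ∀ n : ℕ, 2 ≤ n →
      ∃ n₁ : ℕ, 1 ≤ n₁ ∧ n₁ < n ∧
        T n ≤ T n₁ + T (n - n₁) + Real.logb 2 (min n₁ (n - n₁) : ℕ)) :
    ∀ n : ℕ, 1 ≤ n → T n ≤ n - Real.logb 2 n - 1 := by
  intro n
  induction n using Nat.strong_induction_on with
  | _ n ih =>
    intro hn
    obtain rfl | hn2 := hn.eq_or_lt
    · simp [h1]
    obtain ⟨a, ha, han, hT⟩ := hrec n hn2
    have hTa := ih a han ha
    have hTb := ih (n - a) (by omega) (by omega)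
    have hsplit : ((a : ℕ) : ℝ) + ((n - a : ℕ) : ℝ) = n := by exact_mod_cast Nat.add_sub_of_le han.le
    have hmerge := sub_logb_two_sub_one_add_le (a := a) (b := (n - a : ℕ))
      (by exact_mod_cast ha) (by exact_mod_cast Nat.sub_pos_of_lt han)
    rw [hsplit] at hmerge
    push_cast [Nat.cast_min] at hT hTb hmerge ⊢
    linarith
end

section
/- Fix integers δ ≥ 1 and Δ ≥ 2δ. Consider the all-flip algorithm processing n edge additions on a graph that admits a δ-orientation at all times: each new edge is oriented arbitrarily, and whenever a vertex reaches in-degree Δ + 1, all its incoming edges are flipped, repeating until every vertex has in-degree at most Δ. Then the total number of edge reorientations over the n additions is at most n·(Δ + 1)/(Δ + 1 - 2δ). -/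
/-- The head (vertex the edge points to) of edge `i` under orientation `o`:
`o i = true` means edge `i` points toward its second endpoint. -/
def edgeHead {V : Type*} (E : ℕ → V × V) (o : ℕ → Bool) (i : ℕ) : V :=
  if o i then (E i).2 else (E i).1

/-- In-degree of `v` among the first `m` edges under orientation `o`. -/
def headIndeg {V : Type*} [DecidableEq V] (E : ℕ → V × V) (o : ℕ → Bool)
    (m : ℕ) (v : V) : ℕ :=
  ((Finset.range m).filter (fun i => edgeHead E o i = v)).card

/-!
Fix a reference `δ`-orientation `σ` and call an edge bad when the current orientation disagrees
with `σ`. Of the `Δ + 1` edges reversed by an all-flip at `v`, at most `δ` agree with `σ` (they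
point into `v` under `σ`), so the flip turns at least `Δ + 1 - δ` bad edges good and at most `δ`
good edges bad: the number of bad edges drops by at least `Δ + 1 - 2δ`. An edge addition raises
it by at most one, so `(Δ + 1) · #bad + (Δ + 1 - 2δ) · #reorientations ≤ (Δ + 1) · #additions`
holds throughout the run.
-/

open Finset

section Orientation

variable {V : Type*} [DecidableEq V] (E : ℕ → V × V)

lemma headIndeg_mono (o : ℕ → Bool) {m m' : ℕ} (h : m ≤ m') (v : V) :
    headIndeg E o m v ≤ headIndeg E o m' v :=
  card_le_card (filter_subset_filter _ (range_subset_range.mpr h))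

/-- Against the reference orientation this counts bad edges; against the previous orientation,
the edges a step has reoriented. -/
def disagreeCount (o σ : ℕ → Bool) (m : ℕ) : ℕ :=
  #{i ∈ range m | o i ≠ σ i}

def IsEdgeAddition (o o' : ℕ → Bool) (m m' : ℕ) : Prop :=
  m' = m + 1 ∧ ∀ i < m, o' i = o i

def IsAllFlip (Δ : ℕ) (o o' : ℕ → Bool) (m m' : ℕ) : Prop :=
  m' = m ∧ ∃ v, headIndeg E o m v = Δ + 1 ∧
    ∀ i < m, o' i = if edgeHead E o i = v then !(o i) else o i

lemma disagreeCount_le_of_isEdgeAddition {o o' σ : ℕ → Bool} {m m' : ℕ}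
    (h : IsEdgeAddition o o' m m') :
    disagreeCount o' σ m' ≤ disagreeCount o σ m + 1 := by
  obtain ⟨rfl, hkeep⟩ := h
  have hsame : {i ∈ range m | o' i ≠ σ i} = {i ∈ range m | o i ≠ σ i} :=
    filter_congr fun i hi => by rw [hkeep i (mem_range.mp hi)]
  unfold disagreeCount
  rw [range_add_one, filter_insert, hsame]
  split_ifs
  · exact card_insert_le _ _
  · exact Nat.le_succ _

lemma disagreeCount_flip_add_headIndeg_le {o o' σ : ℕ → Bool} {m : ℕ} {v : V}
    (hflip : ∀ i < m, o' i = if edgeHead E o i = v then !(o i) else o i) :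
    disagreeCount o' σ m + headIndeg E o m v ≤ disagreeCount o σ m + 2 * headIndeg E σ m v := by
  unfold disagreeCount headIndeg
  simp only [card_filter, ← sum_add_distrib, mul_sum]
  refine sum_le_sum fun i hi => ?_
  have hσ : o i = σ i → edgeHead E σ i = edgeHead E o i := fun h => by
    simp only [edgeHead, h]
  rw [hflip i (mem_range.mp hi)]
  by_cases hv : edgeHead E o i = v <;> by_cases hagree : o i = σ i <;>
    simp_all

lemma disagreeCount_add_le_of_isAllFlip {δ Δ : ℕ} {o o' σ : ℕ → Bool} {m m' : ℕ}
    (hσ : ∀ v, headIndeg E σ m v ≤ δ) (h : IsAllFlip E Δ o o' m m') :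
    disagreeCount o' σ m' + (Δ + 1) ≤ disagreeCount o σ m + 2 * δ := by
  obtain ⟨rfl, v, hv, hflip⟩ := h
  have := disagreeCount_flip_add_headIndeg_le E (σ := σ) hflip
  have := hσ v
  omega

lemma disagreeCount_eq_zero_of_isEdgeAddition {o o' : ℕ → Bool} {m m' : ℕ}
    (h : IsEdgeAddition o o' m m') : disagreeCount o' o m = 0 :=
  card_eq_zero.mpr (filter_eq_empty_iff.mpr fun i hi => not_not.mpr (h.2 i (mem_range.mp hi)))

lemma disagreeCount_le_of_isAllFlip {Δ : ℕ} {o o' : ℕ → Bool} {m m' : ℕ}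
    (h : IsAllFlip E Δ o o' m m') : disagreeCount o' o m ≤ Δ + 1 := by
  obtain ⟨-, v, hv, hflip⟩ := h
  rw [← hv]
  refine card_le_card fun i hi => ?_
  obtain ⟨him, hne⟩ := mem_filter.mp hi
  refine mem_filter.mpr ⟨him, by_contra fun hvi => hne ?_⟩
  rw [hflip i (mem_range.mp him), if_neg hvi]

end Orientation

section Run

variable {V : Type*} [DecidableEq V] (E : ℕ → V × V)

/-- Additions may happen at any time, not only when all in-degrees are at most `Δ`. -/
def IsAllFlipRun (Δ T : ℕ) (orient : ℕ → ℕ → Bool) (numAdd : ℕ → ℕ) : Prop :=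
  ∀ t < T, IsEdgeAddition (orient t) (orient (t + 1)) (numAdd t) (numAdd (t + 1)) ∨
    IsAllFlip E Δ (orient t) (orient (t + 1)) (numAdd t) (numAdd (t + 1))

def totalReorientations (orient : ℕ → ℕ → Bool) (numAdd : ℕ → ℕ) (t : ℕ) : ℕ :=
  ∑ s ∈ range t, disagreeCount (orient (s + 1)) (orient s) (numAdd s)

variable {E} {Δ T : ℕ} {orient : ℕ → ℕ → Bool} {numAdd : ℕ → ℕ}

lemma IsAllFlipRun.numAdd_le (hrun : IsAllFlipRun E Δ T orient numAdd) {t : ℕ} (ht : t ≤ T) :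
    numAdd t ≤ numAdd T := by
  refine monotoneOn_of_le_succ Set.ordConnected_Iic (fun s _ _ hs => ?_) ht le_rfl ht
  rw [Order.succ_eq_add_one] at hs ⊢
  rcases hrun s hs with h | h <;> rw [h.1]
  exact Nat.le_succ _

lemma IsAllFlipRun.potential_le {δ : ℕ} {σ : ℕ → Bool} (hΔ : 2 * δ ≤ Δ + 1)
    (hrun : IsAllFlipRun E Δ T orient numAdd) (h0 : numAdd 0 = 0)
    (hσ : ∀ t < T, ∀ v, headIndeg E σ (numAdd t) v ≤ δ) {t : ℕ} (ht : t ≤ T) :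
    (Δ + 1) * disagreeCount (orient t) σ (numAdd t) +
      (Δ + 1 - 2 * δ) * totalReorientations orient numAdd t ≤ (Δ + 1) * numAdd t := by
  induction t with
  | zero => simp [disagreeCount, totalReorientations, h0]
  | succ t ih =>
    have htT : t < T := by omega
    specialize ih htT.le
    rw [totalReorientations, sum_range_succ, ← totalReorientations]
    rcases hrun t htT with hadd | hflip
    · have hbad := disagreeCount_le_of_isEdgeAddition (σ := σ) hadd
      rw [disagreeCount_eq_zero_of_isEdgeAddition hadd, add_zero]
      rw [hadd.1] at hbad ⊢
      nlinarith [Nat.mul_le_mul_left (Δ + 1) hbad]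
    · have hbad := disagreeCount_add_le_of_isAllFlip E (hσ t htT) hflip
      have hre := disagreeCount_le_of_isAllFlip E hflip
      rw [hflip.1] at hbad ⊢
      have hdrop : disagreeCount (orient (t + 1)) σ (numAdd t) + (Δ + 1 - 2 * δ) ≤
          disagreeCount (orient t) σ (numAdd t) := by omega
      nlinarith [Nat.mul_le_mul_left (Δ + 1 - 2 * δ) hre, Nat.mul_le_mul_left (Δ + 1) hdrop]

end Run

lemma card_reorientations_le (orient : ℕ → ℕ → Bool) (numAdd : ℕ → ℕ) (n T : ℕ) :
    #{p ∈ range T ×ˢ range n | p.2 < numAdd p.1 ∧ orient (p.1 + 1) p.2 ≠ orient p.1 p.2}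
      ≤ totalReorientations orient numAdd T := by
  rw [card_filter, sum_product, totalReorientations]
  refine sum_le_sum fun t _ => ?_
  rw [← card_filter, disagreeCount]
  exact card_le_card fun i hi => by simp_all

theorem all_flip_total_reorientations_general
    {V : Type*} [DecidableEq V] (δ Δ n T : ℕ)
    (hΔ : 2 * δ ≤ Δ)
    (E : ℕ → V × V)
    (orient : ℕ → ℕ → Bool) (numAdd : ℕ → ℕ)
    (h0 : numAdd 0 = 0) (hT : numAdd T = n)
    (hstep : ∀ t < T,
      -- edge-addition step: one new edge, arbitrary orientation, no other change,
      -- performed only when every vertex satisfies the in-degree bound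
      (numAdd (t + 1) = numAdd t + 1 ∧
        (∀ i < numAdd t, orient (t + 1) i = orient t i) ∧
        (∀ v, headIndeg E (orient t) (numAdd t) v ≤ Δ)) ∨
      -- all-flip step at a vertex `v` of in-degree `Δ + 1`
      (numAdd (t + 1) = numAdd t ∧
        ∃ v, headIndeg E (orient t) (numAdd t) v = Δ + 1 ∧
          ∀ i < numAdd t, orient (t + 1) i =
            (if edgeHead E (orient t) i = v then !(orient t i) else orient t i)))
    -- the final edge set admits a `δ`-orientation
    (href : ∃ σ : ℕ → Bool, ∀ v, headIndeg E σ n v ≤ δ) :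
    -- the total number of reorientations is at most `n (Δ+1) / (Δ+1-2δ)`
    ((((Finset.range T) ×ˢ (Finset.range n)).filter
        (fun p => p.2 < numAdd p.1 ∧ orient (p.1 + 1) p.2 ≠ orient p.1 p.2)).card : ℝ)
      ≤ n * (Δ + 1) / (Δ + 1 - 2 * δ) := by
  obtain ⟨σ, hσ⟩ := href
  have hrun : IsAllFlipRun E Δ T orient numAdd := fun t ht =>
    (hstep t ht).imp (fun h => ⟨h.1, h.2.1⟩) id
  have hσt : ∀ t < T, ∀ v, headIndeg E σ (numAdd t) v ≤ δ := fun t ht v =>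
    (headIndeg_mono E σ (hT ▸ hrun.numAdd_le ht.le) v).trans (hσ v)
  have hpot := hrun.potential_le (by omega) h0 hσt le_rfl
  have hbound : (Δ + 1 - 2 * δ) * #{p ∈ range T ×ˢ range n |
      p.2 < numAdd p.1 ∧ orient (p.1 + 1) p.2 ≠ orient p.1 p.2} ≤ (Δ + 1) * n := by
    rw [hT] at hpot
    nlinarith [Nat.mul_le_mul_left (Δ + 1 - 2 * δ) (card_reorientations_le orient numAdd n T)]
  have hgap : (0 : ℝ) < Δ + 1 - 2 * δ := by
    have : (2 * δ : ℝ) ≤ Δ := by exact_mod_cast hΔ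
    linarith
  rw [le_div_iff₀ hgap]
  have := (Nat.cast_le (α := ℝ)).mpr hbound
  push_cast [Nat.cast_sub (show 2 * δ ≤ Δ + 1 by omega)] at this
  linarith

/-- The all-flip algorithm: edges arrive one-by-one and are oriented arbitrarily;
whenever a vertex reaches in-degree `Δ + 1`, all of its incoming edges are
flipped, and this is repeated until every vertex has in-degree at most `Δ`.
If the final edge set admits a `δ`-orientation with `δ ≥ 1` and `Δ ≥ 2δ`, then
the total number of edge reorientations over `n` additions is at most
`n * (Δ + 1) / (Δ + 1 - 2δ)`.

The run is encoded by time steps `t = 0, …, T`: `numAdd t` is the number of edges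
added so far and `orient t` the current orientation; each step is either an edge
addition (performed only when all in-degrees are at most `Δ`) or an all-flip at a
vertex of in-degree `Δ + 1`. -/
theorem all_flip_total_reorientations
    {V : Type*} [DecidableEq V] (δ Δ n T : ℕ)
    (hδ : 1 ≤ δ) (hΔ : 2 * δ ≤ Δ)
    (E : ℕ → V × V) (hloop : ∀ i < n, (E i).1 ≠ (E i).2)
    (orient : ℕ → ℕ → Bool) (numAdd : ℕ → ℕ)
    (h0 : numAdd 0 = 0) (hT : numAdd T = n)
    (hstep : ∀ t < T,
      -- edge-addition step: one new edge, arbitrary orientation, no other change,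
      -- performed only when every vertex satisfies the in-degree bound
      (numAdd (t + 1) = numAdd t + 1 ∧
        (∀ i < numAdd t, orient (t + 1) i = orient t i) ∧
        (∀ v, headIndeg E (orient t) (numAdd t) v ≤ Δ)) ∨
      -- all-flip step at a vertex `v` of in-degree `Δ + 1`
      (numAdd (t + 1) = numAdd t ∧
        ∃ v, headIndeg E (orient t) (numAdd t) v = Δ + 1 ∧
          ∀ i < numAdd t, orient (t + 1) i =
            (if edgeHead E (orient t) i = v then !(orient t i) else orient t i)))
    -- the final edge set admits a `δ`-orientation
    (href : ∃ σ : ℕ → Bool, ∀ v, headIndeg E σ n v ≤ δ) :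
    -- the total number of reorientations is at most `n (Δ+1) / (Δ+1-2δ)`
    ((((Finset.range T) ×ˢ (Finset.range n)).filter
        (fun p => p.2 < numAdd p.1 ∧ orient (p.1 + 1) p.2 ≠ orient p.1 p.2)).card : ℝ)
      ≤ n * (Δ + 1) / (Δ + 1 - 2 * δ) :=
  all_flip_total_reorientations_general δ Δ n T hΔ E orient numAdd h0 hT hstep href
end

section
/- Let G^res be a residual directed graph, a ∈ L an arriving vertex, and P a shortest directed path in G^res from a to an unsaturated vertex b. Let H^res be the graph obtained from G^res by reversing all edges of P. If u and v are vertices on P with u appearing before v along P, then the distance from u to v in H^res is at least the distance from u to v in G^res. -/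
/-- `q` is a directed walk of length `k` from `a` to `b` in the digraph `D`. -/
def IsWalk {V : Type*} (D : V → V → Prop) (k : ℕ) (q : ℕ → V) (a b : V) : Prop :=
  q 0 = a ∧ q k = b ∧ ∀ i < k, D (q i) (q (i + 1))

/-!
Let `ψ x` be the `D`-distance from `x` to the unsaturated set. Since `P` is shortest, the vertex
`p i` has `ψ (p i) = L - i`. An edge `x → y` of `H` satisfies `ψ x ≤ ψ y + 1`: for an edge of `D`
this is the triangle inequality, and a reversed edge `p (i + 1) → p i` even decreases `ψ`. Hence a
walk of length `k` from `p s` to `p t` in `H` gives `L - s ≤ k + (L - t)`, so `k ≥ t - s`, the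
length of the segment of `P` from `p s` to `p t`.
-/

/-- `ψ x ≤ m` in the notation of the header, without naming the distance `ψ`. -/
def ReachesWithin {V : Type*} (D : V → V → Prop) (S : Set V) (m : ℕ) (x : V) : Prop :=
  ∃ k ≤ m, ∃ (q : ℕ → V) (y : V), y ∈ S ∧ IsWalk D k q x y

section Walks

variable {V : Type*} {D : V → V → Prop} {x y z : V}

theorem isWalk_one (h : D x y) : IsWalk D 1 (fun j => if j = 0 then x else y) x y :=
  ⟨rfl, rfl, fun i hi => by simpa [Nat.lt_one_iff.mp hi] using h⟩

theorem IsWalk.tail {k : ℕ} {q : ℕ → V} (h : IsWalk D (k + 1) q x y) :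
    IsWalk D k (fun j => q (j + 1)) (q 1) y :=
  ⟨rfl, h.2.1, fun i hi => h.2.2 (i + 1) (by omega)⟩

theorem IsWalk.segment {L i j : ℕ} {p : ℕ → V} (h : IsWalk D L p x y) (hij : i ≤ j)
    (hjL : j ≤ L) : IsWalk D (j - i) (fun n => p (i + n)) (p i) (p j) := by
  refine ⟨rfl, by simp only [Nat.add_sub_cancel' hij], fun n hn => ?_⟩
  simpa only [Nat.add_assoc] using h.2.2 (i + n) (by omega)

theorem IsWalk.append {m n : ℕ} {q r : ℕ → V} (hq : IsWalk D m q x y) (hr : IsWalk D n r y z) :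
    IsWalk D (m + n) (fun j => if j ≤ m then q j else r (j - m)) x z := by
  obtain ⟨hq0, hqm, hqE⟩ := hq
  obtain ⟨hr0, hrn, hrE⟩ := hr
  refine ⟨by simpa using hq0, ?_, fun j hj => ?_⟩
  · rcases Nat.eq_zero_or_pos n with rfl | hn
    · simp [hqm, ← hr0, hrn]
    · simp [show ¬ m + n ≤ m by omega, hrn]
  · rcases lt_trichotomy j m with hjm | rfl | hjm
    · simpa [hjm.le, Nat.succ_le_of_lt hjm] using hqE j hjm
    · simpa [hqm, ← hr0] using hrE 0 (by omega)
    · simpa [show ¬ j ≤ m by omega, show ¬ j + 1 ≤ m by omega, Nat.sub_add_comm hjm.le]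
        using hrE (j - m) (by omega)

end Walks

section ReachesWithin

variable {V : Type*} {D : V → V → Prop} {S : Set V} {m n : ℕ} {x y : V}

theorem ReachesWithin.mono (h : ReachesWithin D S m x) (hmn : m ≤ n) : ReachesWithin D S n x :=
  let ⟨k, hk, hrest⟩ := h
  ⟨k, hk.trans hmn, hrest⟩

theorem ReachesWithin.of_adj (hxy : D x y) (h : ReachesWithin D S m y) :
    ReachesWithin D S (m + 1) x :=
  let ⟨k, hk, q, z, hz, hq⟩ := h
  ⟨1 + k, by omega, _, z, hz, (isWalk_one hxy).append hq⟩

end ReachesWithin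

section ShortestPath

variable {V : Type*} {D : V → V → Prop} {unsat : Set V} {a b : V} {L : ℕ} {p : ℕ → V}

theorem reachesWithin_of_isWalk (hP : IsWalk D L p a b) (hb : b ∈ unsat) {i : ℕ} (hi : i ≤ L) :
    ReachesWithin D unsat (L - i) (p i) :=
  ⟨L - i, le_rfl, _, b, hb, hP.2.1 ▸ hP.segment hi le_rfl⟩

theorem sub_le_of_reachesWithin_of_shortest (hP : IsWalk D L p a b)
    (hshort : ∀ (k : ℕ) (q : ℕ → V) (y : V), y ∈ unsat → IsWalk D k q a y → L ≤ k)
    {i m : ℕ} (hi : i ≤ L) (h : ReachesWithin D unsat m (p i)) : L - i ≤ m := by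
  obtain ⟨k, hk, q, y, hy, hq⟩ := h
  have hprefix : IsWalk D i (fun n => p (0 + n)) a (p i) := by
    simpa [hP.1] using hP.segment (Nat.zero_le i) hi
  have := hshort _ _ y hy (hprefix.append hq)
  omega

theorem reachesWithin_of_isWalk_reversed (hP : IsWalk D L p a b) (hb : b ∈ unsat)
    (hshort : ∀ (k : ℕ) (q : ℕ → V) (y : V), y ∈ unsat → IsWalk D k q a y → L ≤ k)
    {H : V → V → Prop} (hH : ∀ x y, H x y → D x y ∨ ∃ i < L, p i = y ∧ p (i + 1) = x)
    {t : ℕ} (htL : t ≤ L) :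
    ∀ (k : ℕ) (q : ℕ → V) (x : V), IsWalk H k q x (p t) →
      ReachesWithin D unsat (k + (L - t)) x := by
  intro k
  induction k with
  | zero =>
    rintro q x ⟨rfl, hqt, -⟩
    simpa [hqt] using reachesWithin_of_isWalk hP hb htL
  | succ k ih =>
    intro q x hq
    have hnext := ih _ _ hq.tail
    rcases hH _ _ (hq.1 ▸ hq.2.2 0 k.succ_pos) with hD | ⟨i, hiL, hpi, rfl⟩
    · simpa only [Nat.add_right_comm] using hnext.of_adj hD
    · have hi := sub_le_of_reachesWithin_of_shortest hP hshort hiL.le (hpi ▸ hnext)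
      exact (reachesWithin_of_isWalk hP hb hiL).mono (by omega)

end ShortestPath

theorem reversed_path_distance_ge_general
    {V : Type*} (D : V → V → Prop) (unsat : Set V)
    (a b : V) (L : ℕ) (p : ℕ → V)
    (hP : IsWalk D L p a b)
    (hb : b ∈ unsat)
    (hshort : ∀ (k : ℕ) (q : ℕ → V) (y : V), y ∈ unsat → IsWalk D k q a y → L ≤ k)
    (H : V → V → Prop)
    (hH : ∀ x y, H x y ↔
      ((D x y ∧ ¬ ∃ i < L, p i = x ∧ p (i + 1) = y) ∨ (∃ i < L, p i = y ∧ p (i + 1) = x)))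
    (s t : ℕ) (hst : s ≤ t) (htL : t ≤ L) :
    ∀ (k : ℕ) (q : ℕ → V), IsWalk H k q (p s) (p t) →
      ∃ (k' : ℕ) (q' : ℕ → V), k' ≤ k ∧ IsWalk D k' q' (p s) (p t) := by
  intro k q hq
  have hH' : ∀ x y, H x y → D x y ∨ ∃ i < L, p i = y ∧ p (i + 1) = x := fun x y hxy =>
    ((hH x y).mp hxy).imp_left And.left
  have hreach := reachesWithin_of_isWalk_reversed hP hb hshort hH' htL k q (p s) hq
  have hlen := sub_le_of_reachesWithin_of_shortest hP hshort (hst.trans htL) hreach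
  exact ⟨t - s, _, by omega, hP.segment hst htL⟩

/-- Let `P` (given by `p : ℕ → V`, of length `L`, with distinct vertices) be a
shortest directed path in the residual graph `D` from `a` to an unsaturated
vertex, ending at the unsaturated vertex `b`.  Let `H` be the graph obtained from
`D` by reversing the edges of `P`.  If `u = p s` and `v = p t` with `s ≤ t ≤ L`
(`u` appears before `v` on `P`), then the distance from `u` to `v` in `H` is at
least the distance from `u` to `v` in `D`: every `u → v` walk in `H` is at least
as long as some `u → v` walk in `D`. -/
theorem reversed_path_distance_ge
    {V : Type*} [Fintype V] (D : V → V → Prop) (unsat : Set V)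
    (a b : V) (L : ℕ) (p : ℕ → V)
    (hP : IsWalk D L p a b)
    (hb : b ∈ unsat)
    (hinj : ∀ i j, i ≤ L → j ≤ L → p i = p j → i = j)
    (hshort : ∀ (k : ℕ) (q : ℕ → V) (y : V), y ∈ unsat → IsWalk D k q a y → L ≤ k)
    (H : V → V → Prop)
    (hH : ∀ x y, H x y ↔
      ((D x y ∧ ¬ ∃ i < L, p i = x ∧ p (i + 1) = y) ∨ (∃ i < L, p i = y ∧ p (i + 1) = x)))
    (s t : ℕ) (hst : s ≤ t) (htL : t ≤ L) :
    ∀ (k : ℕ) (q : ℕ → V), IsWalk H k q (p s) (p t) →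
      ∃ (k' : ℕ) (q' : ℕ → V), k' ≤ k ∧ IsWalk D k' q' (p s) (p t) :=
  reversed_path_distance_ge_general D unsat a b L p hP hb hshort H hH s t hst htL
end

section
/- Suppose a process over n arrivals maintains heights height(x) ∈ {1, 3, 5, …} for vertices x ∈ L with |L| = n, such that the number of vertices with height ≥ 2h+1 is at most n/2^h for all h ≥ 0, and each swap operation increases the potential Φ = Σ_{x ∈ L} (height(x) - 1)/2 by at least 1, with heights never decreasing and new vertices entering at height contributing nonneg potential. Then the total number of swaps over n arrivals is at most Σ_{h≥0} h·(n/2^h) = 2n. -/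
/-!
Telescoping the swap inequality bounds the total number of swaps by the final potential
`Φ = Σ (height x - 1) / 2`. Layer by layer, `Φ` counts for each `h ≥ 0` the vertices of
height at least `2(h + 1) + 1`; by the tail bound there are at most `n / 2^(h+1)` of them,
and the geometric series gives `Φ ≤ n ≤ 2n`.
-/

open Finset

theorem sum_eq_sum_range_card_filter_lt {ι : Type*} [Fintype ι] (f : ι → ℕ) {H : ℕ}
    (hH : ∀ x, f x ≤ H) : ∑ x, f x = ∑ h ∈ range H, #{x | h < f x} := by
  simp only [card_filter]
  rw [sum_comm]
  refine sum_congr rfl fun x _ => ?_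
  rw [sum_boole, Nat.cast_id, range_eq_Ico, Ico_filter_lt, min_eq_right (hH x)]
  simp

theorem sum_le_of_card_filter_lt_le {ι : Type*} [Fintype ι] (f : ι → ℕ) (c : ℝ)
    (htail : ∀ h, (#{x | h < f x} : ℝ) ≤ c / 2 ^ (h + 1)) :
    ((∑ x, f x : ℕ) : ℝ) ≤ c := by
  have hc : 0 ≤ c / 2 := by simpa using (Nat.cast_nonneg _).trans (htail 0)
  rw [sum_eq_sum_range_card_filter_lt f fun x => le_sup (mem_univ x)]
  push_cast
  calc _ ≤ ∑ h ∈ range (univ.sup f), c / 2 ^ (h + 1) := sum_le_sum fun h _ => htail h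
    _ = c / 2 * ∑ h ∈ range (univ.sup f), (1 / 2 : ℝ) ^ h := by
      rw [mul_sum]; congr! 1 with h; rw [one_div_pow]; ring
    _ ≤ c / 2 * 2 := by gcongr; exact sum_geometric_two_le _
    _ = c := by ring

theorem add_sum_range_le_of_add_le_succ (Φ s : ℕ → ℕ) (hΦ : ∀ t, Φ t + s t ≤ Φ (t + 1))
    (T : ℕ) :
    Φ 0 + ∑ t ∈ range T, s t ≤ Φ T := by
  induction T with
  | zero => simp
  | succ T ih => rw [sum_range_succ]; linarith [hΦ T]

open Finset in
theorem total_swaps_le_two_n_general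
    (n : ℕ) (height : ℕ → Fin n → ℕ) (swaps : ℕ → ℕ)
    (hinit : ∀ x, height 0 x = 1)
    (htail : ∀ t h : ℕ,
      ((univ.filter (fun x => 2 * h + 1 ≤ height t x)).card : ℝ) ≤ n / 2 ^ h)
    (hswap : ∀ t, (∑ x, (height t x - 1) / 2) + swaps t ≤
      ∑ x, (height (t + 1) x - 1) / 2) :
    ∑ t ∈ range n, swaps t ≤ 2 * n := by
  set Φ : ℕ → ℕ := fun t => ∑ x, (height t x - 1) / 2
  have hstart : Φ 0 = 0 := by simp [Φ, hinit]
  have hend : Φ n ≤ n := by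
    suffices (Φ n : ℝ) ≤ n by exact_mod_cast this
    refine sum_le_of_card_filter_lt_le (fun x => (height n x - 1) / 2) _ fun h => ?_
    convert htail n (h + 1) using 4
    omega
  have htotal := add_sum_range_le_of_add_le_succ Φ swaps hswap n
  omega

open Finset in
/-- Abstract potential argument for the shortest augmenting path algorithm
(Theorem 4.1): over `n` arrivals, heights of the `n` left vertices are odd,
start at 1, never decrease, at any time at most `n / 2^h` vertices have height
at least `2h + 1`, and each swap increases the potential
`Φ = Σ (height x - 1) / 2` by at least 1.  Then the total number of swaps over
the `n` arrivals is at most `2n`. -/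
theorem total_swaps_le_two_n
    (n : ℕ) (height : ℕ → Fin n → ℕ) (swaps : ℕ → ℕ)
    (hinit : ∀ x, height 0 x = 1)
    (hodd : ∀ t x, Odd (height t x))
    (hmono : ∀ t x, height t x ≤ height (t + 1) x)
    (htail : ∀ t h : ℕ,
      ((univ.filter (fun x => 2 * h + 1 ≤ height t x)).card : ℝ) ≤ n / 2 ^ h)
    (hswap : ∀ t, (∑ x, (height t x - 1) / 2) + swaps t ≤
      ∑ x, (height (t + 1) x - 1) / 2) :
    ∑ t ∈ range n, swaps t ≤ 2 * n :=
  total_swaps_le_two_n_general n height swaps hinit htail hswap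
end
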